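/- For all 0 ≤ m ≤ p and all a ∉ B₀, H_D^{(m)}(a') = H_D^{(m)}(a), where a' is the 'prime' of a (negate entries with index magnitude at most T(a), keep a₀ and the rest). -/

import Mathlib

open scoped Classical
open Finset

noncomputable section

/-- Bit strings in {±1}^{2p+1}, indexed by integers -p ≤ j ≤ p (Bool-encoded). -/
def QStr (p : ℕ) : Type := {j : ℤ // j ∈ Finset.Icc (-(p : ℤ)) (p : ℤ)} → Bool

instance (p : ℕ) : Fintype (QStr p) := by unfold QStr; infer_instance
instance (p : ℕ) : DecidableEq (QStr p) := by unfold QStr; infer_instance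

/-- The ±1 entry of the string `a` at index `j` (1 outside the index range). -/
def ent (p : ℕ) (a : QStr p) (j : ℤ) : ℝ :=
  if h : j ∈ Finset.Icc (-(p : ℤ)) (p : ℤ) then (if a ⟨j, h⟩ then 1 else -1) else 1

/-- Transfer matrix element ⟨x|e^{iβX}|y⟩ = cos β if x = y, i sin β otherwise. -/
def bket (x y : ℝ) (β : ℝ) : ℂ :=
  if x = y then (Real.cos β : ℂ) else Complex.I * (Real.sin β : ℂ)

/-- f(a) = (1/2)⟨a₁|e^{iβ₁X}|a₂⟩⋯⟨a_p|e^{iβ_pX}|a₀⟩⟨a₀|e^{-iβ_pX}|a_{-p}⟩⋯⟨a_{-2}|e^{-iβ₁X}|a_{-1}⟩. -/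
def fQ (p : ℕ) (β : ℕ → ℝ) (a : QStr p) : ℂ :=
  (1 / 2 : ℂ) * ∏ r ∈ Finset.Icc 1 p,
    (bket (ent p a (r : ℤ)) (ent p a (if r = p then 0 else (r : ℤ) + 1)) (β r) *
      bket (ent p a (if r = p then 0 else -((r : ℤ) + 1))) (ent p a (-(r : ℤ))) (-(β r)))

/-- Γ_r = γ_r, Γ₀ = 0, Γ_{-r} = -γ_r. -/
def Gam (γ : ℕ → ℝ) (j : ℤ) : ℝ :=
  if 0 < j then γ j.toNat else if j < 0 then -(γ (-j).toNat) else 0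

/-- Γ·(ab) = Σ_{j=-p}^{p} Γ_j a_j b_j. -/
def Gdot (p : ℕ) (γ : ℕ → ℝ) (a b : QStr p) : ℝ :=
  ∑ j ∈ Finset.Icc (-(p : ℤ)) (p : ℤ), Gam γ j * ent p a j * ent p b j

/-- a ∈ B₀ iff a_{-r} = a_r for all 1 ≤ r ≤ p. -/
def symB (p : ℕ) (a : QStr p) : Prop :=
  ∀ r ∈ Finset.Icc (1 : ℤ) (p : ℤ), ent p a (-r) = ent p a r

/-- T(a): the largest 1 ≤ r ≤ p with a_r ≠ a_{-r}, and 0 for a ∈ B₀. -/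
def Tof (p : ℕ) (a : QStr p) : ℤ :=
  WithBot.unbotD 0 (((Finset.Icc (1 : ℤ) (p : ℤ)).filter (fun r => ent p a r ≠ ent p a (-r))).max)

/-- The string a' : negate entries with 1 ≤ |j| ≤ T(a), keep the rest. -/
def primeQ (p : ℕ) (a : QStr p) : QStr p :=
  fun j => if 1 ≤ |j.1| ∧ |j.1| ≤ Tof p a then !(a j) else a j

/-- Entrywise negation -a. -/
def negQ (p : ℕ) (a : QStr p) : QStr p := fun j => !(a j)

/-- Index reversal ā, with ā_j = a_{-j}. -/
def revQ (p : ℕ) (a : QStr p) : QStr p :=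
  fun j => a ⟨-j.1, by have h := j.2; simp only [Finset.mem_Icc] at h ⊢; omega⟩

/-- The finite-D iteration (cosine form):
H_D^{(0)}(a) = 1, H_D^{(m)}(a) = (Σ_b f(b) H_D^{(m-1)}(b) cos[(1/√D) Γ·(ab)])^D. -/
def HD (p : ℕ) (β γ : ℕ → ℝ) (D : ℕ) : ℕ → QStr p → ℂ
  | 0, _ => 1
  | m + 1, a =>
      (∑ b : QStr p, fQ p β b * HD p β γ D m b *
        (Real.cos ((1 / Real.sqrt D) * Gdot p γ a b) : ℂ)) ^ D

/-- The finite-D iteration (exponential form):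
H_D^{(0)}(a) = 1, H_D^{(m)}(a) = (Σ_b f(b) H_D^{(m-1)}(b) exp[-(i/√D) Γ·(ab)])^D. -/
def HDexp (p : ℕ) (β γ : ℕ → ℝ) (D : ℕ) : ℕ → QStr p → ℂ
  | 0, _ => 1
  | m + 1, a =>
      (∑ b : QStr p, fQ p β b * HDexp p β γ D m b *
        Complex.exp (-(Complex.I / (Real.sqrt D : ℂ)) * (Gdot p γ a b : ℂ))) ^ D

/-- The D → ∞ iteration: H^{(0)}(a) = 1,
H^{(m)}(a) = exp(-(1/2) Σ_b f(b) H^{(m-1)}(b) (Γ·(ab))²). -/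
def Hinf (p : ℕ) (β γ : ℕ → ℝ) : ℕ → QStr p → ℂ
  | 0, _ => 1
  | m + 1, a =>
      Complex.exp (-(1 / 2 : ℂ) *
        ∑ b : QStr p, fQ p β b * Hinf p β γ m b * ((Gdot p γ a b) ^ 2 : ℝ))

/-- G^{(m)}_{j,k} = Σ_a f(a) H^{(m)}(a) a_j a_k, with H^{(m)} the D → ∞ iterates. -/
def GmatH (p : ℕ) (β γ : ℕ → ℝ) (m : ℕ) (j k : ℤ) : ℂ :=
  ∑ a : QStr p, fQ p β a * Hinf p β γ m a * (ent p a j : ℂ) * (ent p a k : ℂ)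

/-- The recursively-defined G matrices: G^{(0)}_{j,k} = Σ_a f(a) a_j a_k and
G^{(m)}_{j,k} = Σ_a f(a) a_j a_k exp(-(1/2) Σ_{j',k'} G^{(m-1)}_{j',k'} Γ_{j'} Γ_{k'} a_{j'} a_{k'}). -/
def GmatR (p : ℕ) (β γ : ℕ → ℝ) : ℕ → ℤ → ℤ → ℂ
  | 0, j, k => ∑ a : QStr p, fQ p β a * (ent p a j : ℂ) * (ent p a k : ℂ)
  | m + 1, j, k =>
      ∑ a : QStr p, fQ p β a * (ent p a j : ℂ) * (ent p a k : ℂ) *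
        Complex.exp (-(1 / 2 : ℂ) *
          ∑ j' ∈ Finset.Icc (-(p : ℤ)) (p : ℤ), ∑ k' ∈ Finset.Icc (-(p : ℤ)) (p : ℤ),
            GmatR p β γ m j' k' * (Gam γ j' : ℂ) * (Gam γ k' : ℂ) *
              (ent p a j' : ℂ) * (ent p a k' : ℂ))

/-- H^{(m+1)}(a) expressed through G^{(m)}:
H^{(m+1)}(a) = exp(-(1/2) Σ_{j',k'} G^{(m)}_{j',k'} Γ_{j'} Γ_{k'} a_{j'} a_{k'}). -/
def HG (p : ℕ) (β γ : ℕ → ℝ) (m : ℕ) (a : QStr p) : ℂ :=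
  Complex.exp (-(1 / 2 : ℂ) *
    ∑ j' ∈ Finset.Icc (-(p : ℤ)) (p : ℤ), ∑ k' ∈ Finset.Icc (-(p : ℤ)) (p : ℤ),
      GmatR p β γ m j' k' * (Gam γ j' : ℂ) * (Gam γ k' : ℂ) *
        (ent p a j' : ℂ) * (ent p a k' : ℂ))

end

noncomputable section Aux

variable {p : ℕ}

/-- generalized sign flip: negate entries with 1 ≤ |j| ≤ t. -/
def sQt (p : ℕ) (t : ℤ) (a : QStr p) : QStr p :=
  fun j => if 1 ≤ |j.1| ∧ |j.1| ≤ t then !(a j) else a j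

lemma primeQ_eq_sQt (a : QStr p) : primeQ p a = sQt p (Tof p a) a := rfl

lemma ent_values (a : QStr p) (j : ℤ) : ent p a j = 1 ∨ ent p a j = -1 := by
  unfold ent
  split
  · split
    · exact Or.inl rfl
    · exact Or.inr rfl
  · exact Or.inl rfl

lemma eq_neg_of_ne {x y : ℝ} (hx : x = 1 ∨ x = -1) (hy : y = 1 ∨ y = -1)
    (h : x ≠ y) : y = -x := by
  rcases hx with rfl | rfl <;> rcases hy with rfl | rfl <;> simp_all

lemma ent_sQt (t : ℤ) (a : QStr p) {j : ℤ} (hj : j ∈ Finset.Icc (-(p : ℤ)) (p : ℤ)) :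
    ent p (sQt p t a) j = if 1 ≤ |j| ∧ |j| ≤ t then -(ent p a j) else ent p a j := by
  unfold ent sQt
  rw [dif_pos hj, dif_pos hj]
  by_cases h : 1 ≤ |j| ∧ |j| ≤ t
  · rw [if_pos h, if_pos h]
    cases a ⟨j, hj⟩ <;> simp
  · rw [if_neg h, if_neg h]

lemma sQt_sQt (t : ℤ) (a : QStr p) : sQt p t (sQt p t a) = a := by
  funext j
  unfold sQt
  by_cases h : 1 ≤ |j.1| ∧ |j.1| ≤ t
  · rw [if_pos h, if_pos h, Bool.not_not]
  · rw [if_neg h, if_neg h]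

lemma Gam_neg (γ : ℕ → ℝ) (j : ℤ) : Gam γ (-j) = - Gam γ j := by
  unfold Gam
  rcases lt_trichotomy j 0 with h | rfl | h
  · rw [if_pos (by omega), if_neg (by omega), if_pos h, neg_neg]
  · norm_num
  · rw [if_neg (by omega), if_pos (by omega), if_pos h, neg_neg]

lemma Gam_zero (γ : ℕ → ℝ) : Gam γ 0 = 0 := by unfold Gam; norm_num

end Aux

noncomputable section Aux2

variable {p : ℕ}

/-- the filter set defining Tof -/
def TS (p : ℕ) (a : QStr p) : Finset ℤ :=
  (Finset.Icc (1 : ℤ) (p : ℤ)).filter (fun r => ent p a r ≠ ent p a (-r))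

lemma Tof_eq (a : QStr p) : Tof p a = WithBot.unbotD 0 ((TS p a).max) := rfl

lemma Tof_cases (a : QStr p) : Tof p a = 0 ∨ Tof p a ∈ TS p a := by
  rcases h : (TS p a).max with _ | m
  · left; rw [Tof_eq, h]; rfl
  · right
    rw [Tof_eq, h]
    exact Finset.mem_of_max h

lemma le_Tof (a : QStr p) {j : ℤ} (hj : j ∈ Finset.Icc (1 : ℤ) (p : ℤ))
    (hne : ent p a j ≠ ent p a (-j)) : j ≤ Tof p a := by
  have hmem : j ∈ TS p a := Finset.mem_filter.2 ⟨hj, hne⟩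
  obtain ⟨m, hm⟩ := Finset.max_of_mem hmem
  have := Finset.le_max hmem
  rw [hm] at this
  rw [Tof_eq, hm]
  exact_mod_cast this

lemma Tof_nonneg (a : QStr p) : 0 ≤ Tof p a := by
  rcases Tof_cases a with h | h
  · omega
  · have := (Finset.mem_filter.1 h).1
    rw [Finset.mem_Icc] at this
    omega

lemma Tof_le_p (a : QStr p) : Tof p a ≤ (p : ℤ) := by
  rcases Tof_cases a with h | h
  · omega
  · have := (Finset.mem_filter.1 h).1
    rw [Finset.mem_Icc] at this
    omega

lemma sym_of_Tof_lt (a : QStr p) {j : ℤ} (hj : j ∈ Finset.Icc (1 : ℤ) (p : ℤ))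
    (h : Tof p a < j) : ent p a j = ent p a (-j) := by
  by_contra hne
  exact absurd (le_Tof a hj hne) (not_le.2 h)

lemma not_symB_of_Tof_pos {a : QStr p} (h : 1 ≤ Tof p a) : ¬ symB p a := by
  intro hs
  rcases Tof_cases a with h0 | hmem
  · omega
  · obtain ⟨hIcc, hne⟩ := Finset.mem_filter.1 hmem
    exact hne (hs _ hIcc).symm

lemma Tof_pos_of_not_symB {a : QStr p} (h : ¬ symB p a) : 1 ≤ Tof p a := by
  unfold symB at h
  push_neg at h
  obtain ⟨r, hr, hne⟩ := h
  have := le_Tof a hr (fun hh => hne hh.symm)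
  rw [Finset.mem_Icc] at hr
  omega

lemma Tof_ne_of_not_symB {a : QStr p} (h : ¬ symB p a) :
    ent p a (Tof p a) ≠ ent p a (-(Tof p a)) := by
  rcases Tof_cases a with h0 | hmem
  · have := Tof_pos_of_not_symB h; omega
  · exact (Finset.mem_filter.1 hmem).2

lemma TS_sQt (t : ℤ) (a : QStr p) : TS p (sQt p t a) = TS p a := by
  unfold TS
  apply Finset.filter_congr
  intro r hr
  rw [Finset.mem_Icc] at hr
  have hr1 : r ∈ Finset.Icc (-(p : ℤ)) (p : ℤ) := Finset.mem_Icc.2 (by omega)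
  have hr2 : -r ∈ Finset.Icc (-(p : ℤ)) (p : ℤ) := Finset.mem_Icc.2 (by omega)
  rw [ent_sQt t a hr1, ent_sQt t a hr2, abs_neg]
  by_cases h : 1 ≤ |r| ∧ |r| ≤ t
  · rw [if_pos h, if_pos h]
    simp
  · rw [if_neg h, if_neg h]

lemma Tof_sQt (t : ℤ) (a : QStr p) : Tof p (sQt p t a) = Tof p a := by
  rw [Tof_eq, Tof_eq, TS_sQt]

lemma Tof_primeQ (a : QStr p) : Tof p (primeQ p a) = Tof p a := by
  rw [primeQ_eq_sQt, Tof_sQt]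

lemma primeQ_primeQ (a : QStr p) : primeQ p (primeQ p a) = a := by
  rw [primeQ_eq_sQt (primeQ p a), Tof_primeQ, primeQ_eq_sQt a, sQt_sQt]

lemma primeQ_ne {a : QStr p} (h : 1 ≤ Tof p a) : primeQ p a ≠ a := by
  intro heq
  have hp1 : (1 : ℤ) ≤ (p : ℤ) := le_trans h (Tof_le_p a)
  have hmem : (1 : ℤ) ∈ Finset.Icc (-(p : ℤ)) (p : ℤ) := Finset.mem_Icc.2 (by omega)
  have := congrFun heq ⟨1, hmem⟩
  unfold primeQ at this
  rw [if_pos (by constructor <;> simp [h])] at this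
  exact Bool.not_ne_self _ this

end Aux2

noncomputable section Aux3

variable {p : ℕ}

lemma Gdot_comm (γ : ℕ → ℝ) (a b : QStr p) : Gdot p γ a b = Gdot p γ b a := by
  unfold Gdot
  exact Finset.sum_congr rfl (fun j _ => by ring)

lemma Gdot_flip (γ : ℕ → ℝ) (t : ℤ) (a b : QStr p)
    (hA : ∀ j : ℤ, t < j → j ∈ Finset.Icc (1 : ℤ) (p : ℤ) → ent p a j = ent p a (-j))
    (hB : ∀ j : ℤ, t < j → j ∈ Finset.Icc (1 : ℤ) (p : ℤ) → ent p b j = ent p b (-j)) :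
    Gdot p γ (sQt p t a) b = - Gdot p γ a b := by
  have key : Gdot p γ (sQt p t a) b + Gdot p γ a b = 0 := by
    unfold Gdot
    rw [← Finset.sum_add_distrib]
    set F : ℤ → ℝ := fun j =>
      Gam γ j * ent p (sQt p t a) j * ent p b j + Gam γ j * ent p a j * ent p b j with hF
    have hzero : ∀ j : ℤ, j ∈ Finset.Icc (-(p : ℤ)) (p : ℤ) → F j + F (-j) = 0 := by
      intro j hj
      have hj' : -j ∈ Finset.Icc (-(p : ℤ)) (p : ℤ) := by
        rw [Finset.mem_Icc] at hj ⊢; omega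
      by_cases hc : 1 ≤ |j| ∧ |j| ≤ t
      · have hc' : 1 ≤ |(-j)| ∧ |(-j)| ≤ t := by rwa [abs_neg]
        rw [hF]
        simp only
        rw [ent_sQt t a hj, ent_sQt t a hj', if_pos hc, if_pos hc']
        ring
      · rcases eq_or_ne j 0 with rfl | hj0
        · rw [hF]; simp [Gam_zero]
        · have hjt : t < |j| := by
            rcases abs_cases j with ⟨h1, _⟩ | ⟨h1, _⟩ <;> omega
          have hc' : ¬ (1 ≤ |(-j)| ∧ |(-j)| ≤ t) := by rwa [abs_neg]
          have hsym : ∀ c : QStr p, (∀ k : ℤ, t < k → k ∈ Finset.Icc (1 : ℤ) (p : ℤ) →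
              ent p c k = ent p c (-k)) → ent p c (-j) = ent p c j := by
            intro c hc2
            rcases lt_or_gt_of_ne hj0 with hneg | hpos
            · have h2 := hc2 (-j) (by rcases abs_cases j with ⟨h1,_⟩|⟨h1,_⟩ <;> omega)
                (by rw [Finset.mem_Icc] at hj ⊢; omega)
              rw [neg_neg] at h2
              exact h2
            · exact (hc2 j (by rcases abs_cases j with ⟨h1,_⟩|⟨h1,_⟩ <;> omega)
                (by rw [Finset.mem_Icc] at hj ⊢; omega)).symm
          rw [hF]
          simp only
          rw [ent_sQt t a hj, ent_sQt t a hj', if_neg hc, if_neg hc',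
            Gam_neg, hsym a hA, hsym b hB]
          ring
    apply Finset.sum_involution (g := fun j _ => -j)
    · exact fun j hj => hzero j hj
    · intro j hj hFne hne
      have : j = 0 := by omega
      subst this
      apply hFne
      simp [Gam_zero]
    · intro j hj
      simp only [Finset.mem_Icc] at *
      omega
    · intro j hj
      simp only [Finset.mem_Icc] at *
      omega
  linarith

end Aux3

noncomputable section Aux4

variable {p : ℕ}

lemma bket_neg_neg (x y c : ℝ) : bket (-x) (-y) c = bket x y c := by
  by_cases h : x = y <;> simp [bket, neg_inj, h]

lemma factor_flip (x y : ℝ) (hx : x = 1 ∨ x = -1) (hy : y = 1 ∨ y = -1) (c : ℝ) :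
    bket (-x) y c * bket y x (-c) = -(bket x y c * bket y (-x) (-c)) := by
  rcases hx with rfl | rfl <;> rcases hy with rfl | rfl <;>
    norm_num [bket, Real.sin_neg, Real.cos_neg] <;> ring

lemma fQ_primeQ (β : ℕ → ℝ) {b : QStr p} (hb : ¬ symB p b) :
    fQ p β (primeQ p b) = - fQ p β b := by
  have hT1 : 1 ≤ Tof p b := Tof_pos_of_not_symB hb
  have hTp : Tof p b ≤ (p : ℤ) := Tof_le_p b
  have hTne : ent p b (Tof p b) ≠ ent p b (-(Tof p b)) := Tof_ne_of_not_symB hb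
  have hmax : ∀ j : ℤ, Tof p b < j → j ≤ (p : ℤ) → ent p b j = ent p b (-j) := by
    intro j h1 h2
    exact sym_of_Tof_lt b (Finset.mem_Icc.2 ⟨by omega, h2⟩) h1
  have hent : ∀ k : ℤ, -(p : ℤ) ≤ k → k ≤ (p : ℤ) →
      ent p (primeQ p b) k =
        if 1 ≤ |k| ∧ |k| ≤ Tof p b then -(ent p b k) else ent p b k := by
    intro k h1 h2
    rw [primeQ_eq_sQt]
    exact ent_sQt (Tof p b) b (Finset.mem_Icc.2 ⟨h1, h2⟩)
  have entP : ∀ k : ℤ, 1 ≤ |k| → |k| ≤ Tof p b → -(p : ℤ) ≤ k → k ≤ (p : ℤ) →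
      ent p (primeQ p b) k = -(ent p b k) := by
    intro k h1 h2 h3 h4
    rw [hent k h3 h4, if_pos ⟨h1, h2⟩]
  have entN : ∀ k : ℤ, ¬ (1 ≤ |k| ∧ |k| ≤ Tof p b) → -(p : ℤ) ≤ k → k ≤ (p : ℤ) →
      ent p (primeQ p b) k = ent p b k := by
    intro k h1 h3 h4
    rw [hent k h3 h4, if_neg h1]
  have key : ∀ r ∈ Finset.Icc 1 p,
      (bket (ent p (primeQ p b) (r : ℤ))
          (ent p (primeQ p b) (if r = p then 0 else (r : ℤ) + 1)) (β r) *
        bket (ent p (primeQ p b) (if r = p then 0 else -((r : ℤ) + 1)))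
          (ent p (primeQ p b) (-(r : ℤ))) (-(β r))) =
      (if r = (Tof p b).toNat then (-1 : ℂ) else 1) *
      (bket (ent p b (r : ℤ)) (ent p b (if r = p then 0 else (r : ℤ) + 1)) (β r) *
        bket (ent p b (if r = p then 0 else -((r : ℤ) + 1))) (ent p b (-(r : ℤ))) (-(β r))) := by
    intro r hr
    rw [Finset.mem_Icc] at hr
    obtain ⟨hr1, hr2⟩ := hr
    have hrp' : (r : ℤ) ≤ (p : ℤ) := by exact_mod_cast hr2
    have hr1' : (1 : ℤ) ≤ (r : ℤ) := by exact_mod_cast hr1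
    have habsr : |(r : ℤ)| = (r : ℤ) := abs_of_nonneg (by omega)
    have habsr1 : |(r : ℤ) + 1| = (r : ℤ) + 1 := abs_of_nonneg (by omega)
    have habs0 : ¬ ((1 : ℤ) ≤ |(0 : ℤ)| ∧ |(0 : ℤ)| ≤ Tof p b) := by
      intro h; simp at h
    by_cases hrT : (r : ℤ) = Tof p b
    · -- boundary factor : flips sign
      have hite : (if r = (Tof p b).toNat then (-1 : ℂ) else 1) = -1 := by
        rw [if_pos (by omega)]
      rw [hite]
      have hu := ent_values b (r : ℤ)
      have hnegr : ent p b (-(r : ℤ)) = -(ent p b (r : ℤ)) := by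
        apply eq_neg_of_ne hu (ent_values _ _)
        rw [hrT]; exact hTne
      have hEr : ent p (primeQ p b) (r : ℤ) = -(ent p b (r : ℤ)) :=
        entP _ (by omega) (by omega) (by omega) (by omega)
      have hEnegr : ent p (primeQ p b) (-(r : ℤ)) = ent p b (r : ℤ) := by
        rw [entP _ (by rw [abs_neg]; omega) (by rw [abs_neg]; omega) (by omega) (by omega),
          hnegr, neg_neg]
      by_cases hrp : r = p
      · simp only [if_pos hrp]
        have hE0 : ent p (primeQ p b) (0 : ℤ) = ent p b 0 :=
          entN _ habs0 (by omega) (by omega)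
        rw [hEr, hEnegr, hE0, hnegr,
          factor_flip _ _ hu (ent_values b 0) (β r)]
        ring
      · simp only [if_neg hrp]
        have hrp2 : (r : ℤ) < (p : ℤ) := by
          rcases lt_or_eq_of_le hrp' with h | h
          · exact h
          · exact absurd (by exact_mod_cast h) hrp
        have hEn : ent p (primeQ p b) ((r : ℤ) + 1) = ent p b ((r : ℤ) + 1) :=
          entN _ (by rw [habsr1]; omega) (by omega) (by omega)
        have hEn' : ent p (primeQ p b) (-((r : ℤ) + 1)) = ent p b ((r : ℤ) + 1) := by
          rw [entN _ (by rw [abs_neg, habsr1]; omega) (by omega) (by omega),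
            ← hmax ((r : ℤ) + 1) (by omega) (by omega)]
        have hbn : ent p b (-((r : ℤ) + 1)) = ent p b ((r : ℤ) + 1) :=
          (hmax ((r : ℤ) + 1) (by omega) (by omega)).symm
        rw [hEr, hEnegr, hEn, hEn', hbn, hnegr,
          factor_flip _ _ hu (ent_values b ((r : ℤ) + 1)) (β r)]
        ring
    · -- non-boundary factor : unchanged
      have hite : (if r = (Tof p b).toNat then (-1 : ℂ) else 1) = 1 := by
        rw [if_neg (by omega)]
      rw [hite, one_mul]
      rcases lt_or_gt_of_ne hrT with hlt | hgt
      · -- r < T : all four entries negated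
        have hrp : r ≠ p := by omega
        simp only [if_neg hrp]
        rw [entP (r : ℤ) (by omega) (by omega) (by omega) (by omega),
          entP ((r : ℤ) + 1) (by rw [habsr1]; omega) (by rw [habsr1]; omega) (by omega) (by omega),
          entP (-((r : ℤ) + 1)) (by rw [abs_neg, habsr1]; omega) (by rw [abs_neg, habsr1]; omega) (by omega) (by omega),
          entP (-(r : ℤ)) (by rw [abs_neg]; omega) (by rw [abs_neg]; omega) (by omega) (by omega),
          bket_neg_neg, bket_neg_neg]
      · -- r > T : all entries unchanged
        have e1 : ent p (primeQ p b) (r : ℤ) = ent p b (r : ℤ) :=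
          entN _ (by rw [habsr]; omega) (by omega) (by omega)
        have e3 : ent p (primeQ p b) (-(r : ℤ)) = ent p b (-(r : ℤ)) :=
          entN _ (by rw [abs_neg, habsr]; omega) (by omega) (by omega)
        by_cases hrp : r = p
        · simp only [if_pos hrp]
          rw [e1, e3, entN 0 habs0 (by omega) (by omega)]
        · simp only [if_neg hrp]
          have hrp2 : (r : ℤ) < (p : ℤ) := by
            rcases lt_or_eq_of_le hrp' with h | h
            · exact h
            · exact absurd (by exact_mod_cast h) hrp
          rw [e1, e3, entN ((r : ℤ) + 1) (by rw [habsr1]; omega) (by omega) (by omega),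
            entN (-((r : ℤ) + 1)) (by rw [abs_neg, habsr1]; omega) (by omega) (by omega)]
  unfold fQ
  rw [Finset.prod_congr rfl key, Finset.prod_mul_distrib,
    Finset.prod_ite_eq' (Finset.Icc 1 p) (Tof p b).toNat (fun _ => (-1 : ℂ)),
    if_pos (Finset.mem_Icc.2 ⟨by omega, by omega⟩)]
  ring

end Aux4

noncomputable section Aux5

variable {p : ℕ}

lemma HD_primeQ (β γ : ℕ → ℝ) (D : ℕ) :
    ∀ (m : ℕ) (a : QStr p), ¬ symB p a →
      HD p β γ D m (primeQ p a) = HD p β γ D m a := by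
  intro m
  induction m with
  | zero => intro a _; rfl
  | succ m ih =>
    intro a ha
    have hTa0 : 0 ≤ Tof p a := Tof_nonneg a
    have hA : ∀ j : ℤ, Tof p a < j → j ∈ Finset.Icc (1 : ℤ) (p : ℤ) →
        ent p a j = ent p a (-j) := fun j h1 h2 => sym_of_Tof_lt a h2 h1
    have hA' : ∀ j : ℤ, Tof p a < j → j ∈ Finset.Icc (1 : ℤ) (p : ℤ) →
        ent p (primeQ p a) j = ent p (primeQ p a) (-j) := by
      intro j h1 h2
      rw [Finset.mem_Icc] at h2
      have habs : |j| = j := abs_of_nonneg (by omega)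
      have hm1 : j ∈ Finset.Icc (-(p : ℤ)) (p : ℤ) := Finset.mem_Icc.2 (by omega)
      have hm2 : -j ∈ Finset.Icc (-(p : ℤ)) (p : ℤ) := Finset.mem_Icc.2 (by omega)
      rw [primeQ_eq_sQt, ent_sQt _ _ hm1, ent_sQt _ _ hm2,
        if_neg (by rw [habs]; omega), if_neg (by rw [abs_neg, habs]; omega)]
      exact hA j h1 (Finset.mem_Icc.2 (by omega))
    have hzero : ∀ c : QStr p,
        (∀ j : ℤ, Tof p a < j → j ∈ Finset.Icc (1 : ℤ) (p : ℤ) →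
          ent p c j = ent p c (-j)) →
        ∑ b ∈ Finset.univ.filter (fun b : QStr p => ¬ Tof p b ≤ Tof p a),
          (fQ p β b * HD p β γ D m b *
            (Real.cos ((1 / Real.sqrt D) * Gdot p γ c b) : ℂ)) = 0 := by
      intro c hc
      apply Finset.sum_involution (g := fun b _ => primeQ p b)
      · intro b hbmem
        rw [Finset.mem_filter] at hbmem
        have hTb : Tof p a < Tof p b := not_le.1 hbmem.2
        have hb1 : 1 ≤ Tof p b := by omega
        have hbB : ¬ symB p b := not_symB_of_Tof_pos hb1
        have hg : Gdot p γ c (primeQ p b) = - Gdot p γ c b := by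
          rw [Gdot_comm, primeQ_eq_sQt, Gdot_flip γ (Tof p b) b c
            (fun j h1 h2 => sym_of_Tof_lt b h2 h1)
            (fun j h1 h2 => hc j (by omega) h2), Gdot_comm]
        rw [fQ_primeQ β hbB, ih b hbB, hg, mul_neg, Real.cos_neg]
        ring
      · intro b hbmem _
        rw [Finset.mem_filter] at hbmem
        exact primeQ_ne (by have := not_le.1 hbmem.2; omega)
      · intro b hbmem
        rw [Finset.mem_filter] at hbmem ⊢
        exact ⟨Finset.mem_univ _, by rw [Tof_primeQ]; exact hbmem.2⟩
      · intro b _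
        exact primeQ_primeQ b
    have hsum : (∑ b : QStr p, fQ p β b * HD p β γ D m b *
          (Real.cos ((1 / Real.sqrt D) * Gdot p γ (primeQ p a) b) : ℂ)) =
        (∑ b : QStr p, fQ p β b * HD p β γ D m b *
          (Real.cos ((1 / Real.sqrt D) * Gdot p γ a b) : ℂ)) := by
      rw [← Finset.sum_filter_add_sum_filter_not Finset.univ
          (fun b : QStr p => Tof p b ≤ Tof p a)
          (fun b => fQ p β b * HD p β γ D m b *
            (Real.cos ((1 / Real.sqrt D) * Gdot p γ (primeQ p a) b) : ℂ)),
        ← Finset.sum_filter_add_sum_filter_not Finset.univ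
          (fun b : QStr p => Tof p b ≤ Tof p a)
          (fun b => fQ p β b * HD p β γ D m b *
            (Real.cos ((1 / Real.sqrt D) * Gdot p γ a b) : ℂ)),
        hzero a hA, hzero (primeQ p a) hA']
      rw [add_zero, add_zero]
      apply Finset.sum_congr rfl
      intro b hbmem
      rw [Finset.mem_filter] at hbmem
      have hg : Gdot p γ (primeQ p a) b = - Gdot p γ a b := by
        rw [primeQ_eq_sQt]
        exact Gdot_flip γ (Tof p a) a b hA
          (fun j h1 h2 => sym_of_Tof_lt b h2 (by have := hbmem.2; omega))
      rw [hg, mul_neg, Real.cos_neg]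
    simp only [HD, hsum]

end Aux5

/-- H_D^{(m)}(a') = H_D^{(m)}(a) for a ∉ B₀ and 0 ≤ m ≤ p. -/
theorem stmt_7 (p : ℕ) (hp : 1 ≤ p) (D : ℕ) (hD : 1 ≤ D) (β γ : ℕ → ℝ)
    (m : ℕ) (hm : m ≤ p) (a : QStr p) (ha : ¬ symB p a) :
    HD p β γ D m (primeQ p a) = HD p β γ D m a :=
  HD_primeQ β γ D m a ha
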